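/- arXiv:2504.07629 — 2 statements merged into one kernel-verified Lean document; each statement's English description precedes it below -/
import Mathlib

section
/- Let B : ℝ³ → ℝ³ be twice continuously differentiable, u : ℝ³ → ℝ³ continuously differentiable, and α, β : ℝ³ → ℝ continuously differentiable. If B + curl u = α u and u − curl B = −β B pointwise on ℝ³, then B satisfies the double curl equation curl (curl B) − (α + β) · curl B + (1 + α β) · B = (∇β) × B pointwise on ℝ³. -/
noncomputable section

open Real MeasureTheory

/-- ℝ³ as coordinate functions. -/
abbrev V3 : Type := Fin 3 → ℝ

/-- Partial derivative in the `i`-th coordinate direction. -/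
noncomputable def pd (i : Fin 3) (f : V3 → ℝ) (x : V3) : ℝ :=
  fderiv ℝ f x (Pi.single i 1)

/-- Curl of a vector field on ℝ³:
`curl v = (∂₂v₃ − ∂₃v₂, ∂₃v₁ − ∂₁v₃, ∂₁v₂ − ∂₂v₁)`. -/
noncomputable def curl (v : V3 → V3) (x : V3) : V3 :=
  ![pd 1 (fun y => v y 2) x - pd 2 (fun y => v y 1) x,
    pd 2 (fun y => v y 0) x - pd 0 (fun y => v y 2) x,
    pd 0 (fun y => v y 1) x - pd 1 (fun y => v y 0) x]

/-- Divergence of a vector field on ℝ³. -/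
noncomputable def div3 (v : V3 → V3) (x : V3) : ℝ :=
  pd 0 (fun y => v y 0) x + pd 1 (fun y => v y 1) x + pd 2 (fun y => v y 2) x

/-- Gradient of a scalar function on ℝ³. -/
noncomputable def grad (f : V3 → ℝ) (x : V3) : V3 :=
  ![pd 0 f x, pd 1 f x, pd 2 f x]

/-- Cross product on ℝ³. -/
def cross (a b : V3) : V3 :=
  ![a 1 * b 2 - a 2 * b 1, a 2 * b 0 - a 0 * b 2, a 0 * b 1 - a 1 * b 0]

/-- Componentwise Laplacian of a vector field. -/
noncomputable def lap (v : V3 → V3) (x : V3) : V3 :=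
  fun j => ∑ i : Fin 3, pd i (fun y => pd i (fun z => v z j) y) x

/-- Advection term `((u·∇)w)_j = Σ_i u_i ∂_i w_j`. -/
noncomputable def adv (u w : V3 → V3) (x : V3) : V3 :=
  fun j => ∑ i : Fin 3, u x i * pd i (fun y => w y j) x

/-- Time derivative of a time-dependent vector field. -/
noncomputable def dt (u : ℝ → V3 → V3) (t : ℝ) (x : V3) : V3 :=
  fun j => deriv (fun s => u s x j) t

lemma pd_key {a b c d : V3 → ℝ} {x : V3}
    (ha : DifferentiableAt ℝ a x) (hb : DifferentiableAt ℝ b x)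
    (hc : DifferentiableAt ℝ c x) (hd : DifferentiableAt ℝ d x) (i : Fin 3) :
    pd i (fun y => a y - b y - c y * d y) x
      = pd i a x - pd i b x - (pd i c x * d x + c x * pd i d x) := by
  simp only [pd]
  rw [show (fun y => a y - b y - c y * d y) = (fun y => (a y - b y) - (c y * d y)) from rfl,
    fderiv_fun_sub (ha.fun_sub hb) (hc.fun_mul hd), fderiv_fun_sub ha hb, fderiv_fun_mul hc hd]
  simp; ring

lemma pd_sub {a b : V3 → ℝ} {x : V3}
    (ha : DifferentiableAt ℝ a x) (hb : DifferentiableAt ℝ b x) (i : Fin 3) :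
    pd i (fun y => a y - b y) x = pd i a x - pd i b x := by
  simp only [pd, fderiv_fun_sub ha hb]; simp

lemma diff_pd_comp {B : V3 → V3} (hB : ContDiff ℝ 2 B) (j k : Fin 3) :
    Differentiable ℝ (fun y => pd j (fun z => B z k) y) := by
  have hk : ContDiff ℝ 2 (fun z => B z k) := contDiff_pi.mp hB k
  have h1 : ContDiff ℝ 1 (fun y => fderiv ℝ (fun z => B z k) y) :=
    hk.fderiv_right (by norm_num)
  exact fun y => ((h1.clm_apply contDiff_const).differentiable one_ne_zero) y

/-- a double Beltrami state's magnetic field satisfies the double curl equation. -/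
theorem double_curl_equation_for_B
    (u B : V3 → V3) (α β : V3 → ℝ)
    (hB : ContDiff ℝ 2 B) (hu : ContDiff ℝ 1 u)
    (hα : ContDiff ℝ 1 α) (hβ : ContDiff ℝ 1 β)
    (h1 : ∀ x, B x + curl u x = α x • u x)
    (h2 : ∀ x, u x - curl B x = -(β x) • B x) :
    ∀ x, curl (fun y => curl B y) x - (α x + β x) • curl B x + (1 + α x * β x) • B x
      = cross (grad β x) (B x) := by
  have hu' : u = fun y => curl B y - β y • B y := by
    funext y j
    have h := congrFun (h2 y) j
    simp only [Pi.sub_apply, Pi.smul_apply, smul_eq_mul, Pi.neg_apply, neg_smul] at h ⊢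
    linarith
  subst hu'
  intro x
  have hβd : DifferentiableAt ℝ β x := hβ.differentiable one_ne_zero x
  have hBd : ∀ k : Fin 3, DifferentiableAt ℝ (fun y => B y k) x :=
    fun k => ((contDiff_pi.mp hB k).differentiable (by norm_num)) x
  have hpd : ∀ j k : Fin 3, DifferentiableAt ℝ (fun y => pd j (fun z => B z k) y) x :=
    fun j k => diff_pd_comp hB j k x
  have h := h1 x
  simp only [curl, Pi.sub_apply, Pi.smul_apply, smul_eq_mul,
    Matrix.cons_val_zero, Matrix.cons_val_one, Matrix.head_cons, Matrix.cons_val_two,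
    Matrix.tail_cons, Fin.isValue] at h
  rw [pd_key (hpd _ _) (hpd _ _) hβd (hBd _), pd_key (hpd _ _) (hpd _ _) hβd (hBd _),
      pd_key (hpd _ _) (hpd _ _) hβd (hBd _), pd_key (hpd _ _) (hpd _ _) hβd (hBd _),
      pd_key (hpd _ _) (hpd _ _) hβd (hBd _), pd_key (hpd _ _) (hpd _ _) hβd (hBd _)] at h
  have h0 := congrFun h 0
  have h1' := congrFun h 1
  have h2' := congrFun h 2
  simp only [Pi.add_apply, Pi.sub_apply, Pi.smul_apply, smul_eq_mul,
    Matrix.cons_val_zero, Matrix.cons_val_one, Matrix.head_cons,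
    Matrix.cons_val_two, Matrix.tail_cons, Fin.isValue] at h0 h1' h2'
  funext j
  fin_cases j <;>
  · simp only [curl, cross, grad, Pi.add_apply, Pi.sub_apply, Pi.smul_apply, smul_eq_mul,
      Matrix.cons_val_zero, Matrix.cons_val_one, Matrix.head_cons, Matrix.cons_val_two,
      Matrix.tail_cons, Fin.zero_eta, Fin.mk_one, Fin.isValue, Fin.reduceFinMk]
    rw [pd_sub (hpd _ _) (hpd _ _), pd_sub (hpd _ _) (hpd _ _)]
    linarith [h0, h1', h2']
end
end

section
/- Let ν > 0 and λ₁, λ₂ ∈ ℝ, and let u₀¹, u₀² : ℝ³ → ℝ³ be twice continuously differentiable with div u₀ⁱ = 0 and curl u₀ⁱ = λ_i u₀ⁱ for i = 1, 2. Set α = (λ₁ + λ₂ + √((λ₁ − λ₂)² + 4))/2 and define u(t, x) = e^{−ν λ₁² t} u₀¹(x) + e^{−ν λ₂² t} u₀²(x) and B(t, x) = (α − λ₁) e^{−ν λ₁² t} u₀¹(x) + (α − λ₂) e^{−ν λ₂² t} u₀²(x). Then (u, B), with constant pressure, solves the viscous resistive Hall MHD equations with ν = η pointwise on [0, ∞)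 × ℝ³: ∂ₜu + (curl u) × u − ν Δu = (curl B) × B, ∂ₜB + curl(B × u) + curl((curl B) × B) − ν ΔB = 0, and div u = div B = 0, where all spatial operators act in x. -/
noncomputable section

open Real MeasureTheory

lemma pd_comb {f g : V3 → ℝ} {x : V3} (hf : DifferentiableAt ℝ f x)
    (hg : DifferentiableAt ℝ g x) (a b : ℝ) (i : Fin 3) :
    pd i (fun y => a * f y + b * g y) x = a * pd i f x + b * pd i g x := by
  have h1 : DifferentiableAt ℝ (fun y => a * f y) x := hf.const_mul a
  have h2 : DifferentiableAt ℝ (fun y => b * g y) x := hg.const_mul b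
  simp only [pd, fderiv_fun_add h1 h2, fderiv_const_mul hf, fderiv_const_mul hg,
    ContinuousLinearMap.add_apply, ContinuousLinearMap.smul_apply, smul_eq_mul]

lemma pd_neg {f : V3 → ℝ} {x : V3} (i : Fin 3) :
    pd i (fun y => -f y) x = -pd i f x := by
  simp [pd, fderiv_neg]

lemma contDiff_pd {f : V3 → ℝ} (hf : ContDiff ℝ 2 f) (j : Fin 3) :
    ContDiff ℝ 1 (fun y => pd j f y) := by
  have h : ContDiff ℝ 1 (fderiv ℝ f) := hf.fderiv_right (m := 1) (by norm_num)
  exact (ContinuousLinearMap.apply ℝ ℝ ((Pi.single j 1 : V3))).contDiff.comp h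

lemma pd_symm {f : V3 → ℝ} (hf : ContDiff ℝ 2 f) (i j : Fin 3) (x : V3) :
    pd i (fun y => pd j f y) x = pd j (fun y => pd i f y) x := by
  have hd : DifferentiableAt ℝ (fderiv ℝ f) x :=
    ((hf.fderiv_right (m := 1) (by norm_num)).differentiable one_ne_zero) x
  have key : ∀ v w : V3, fderiv ℝ (fun y => fderiv ℝ f y w) x v
      = fderiv ℝ (fderiv ℝ f) x v w := by
    intro v w
    rw [fderiv_clm_apply hd (differentiableAt_const w)]
    simp
  have hsymm := (hf.contDiffAt (x := x)).isSymmSndFDerivAt (by norm_num)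
  simp only [pd]
  rw [key, key, hsymm]

lemma pd_comb'' {w1 w2 : V3 → V3} (h1 : ContDiff ℝ 1 w1) (h2 : ContDiff ℝ 1 w2)
    (a b : ℝ) (i j : Fin 3) (x : V3) :
    pd i (fun y => a * w1 y j + b * w2 y j) x
      = a * pd i (fun y => w1 y j) x + b * pd i (fun y => w2 y j) x :=
  pd_comb (((contDiff_pi.mp h1 j).differentiable one_ne_zero) x)
    (((contDiff_pi.mp h2 j).differentiable one_ne_zero) x) a b i

lemma curl_comb {w1 w2 : V3 → V3} (h1 : ContDiff ℝ 1 w1) (h2 : ContDiff ℝ 1 w2)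
    (a b : ℝ) (x : V3) :
    curl (fun y => a • w1 y + b • w2 y) x = a • curl w1 x + b • curl w2 x := by
  funext j
  fin_cases j <;>
    simp [curl, pd_comb'' h1 h2] <;> ring

lemma div3_comb {w1 w2 : V3 → V3} (h1 : ContDiff ℝ 1 w1) (h2 : ContDiff ℝ 1 w2)
    (a b : ℝ) (x : V3) :
    div3 (fun y => a • w1 y + b • w2 y) x = a * div3 w1 x + b * div3 w2 x := by
  simp [div3, pd_comb'' h1 h2]; ring

lemma curl_neg (w : V3 → V3) (x : V3) :
    curl (fun y => -(w y)) x = -(curl w x) := by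
  funext j
  fin_cases j <;> simp [curl, Pi.neg_apply, pd_neg] <;> ring

lemma lap_comb {w1 w2 : V3 → V3} (h1 : ContDiff ℝ 2 w1) (h2 : ContDiff ℝ 2 w2)
    (a b : ℝ) (x : V3) :
    lap (fun y => a • w1 y + b • w2 y) x = a • lap w1 x + b • lap w2 x := by
  funext j
  simp only [lap, Pi.add_apply, Pi.smul_apply, smul_eq_mul]
  rw [Finset.mul_sum, Finset.mul_sum, ← Finset.sum_add_distrib]
  refine Finset.sum_congr rfl fun i _ => ?_
  have hin : (fun y => pd i (fun z => a * w1 z j + b * w2 z j) y)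
      = fun y => a * pd i (fun z => w1 z j) y + b * pd i (fun z => w2 z j) y :=
    funext fun y => pd_comb'' (h1.of_le one_le_two) (h2.of_le one_le_two) a b i j y
  rw [hin, pd_comb ((contDiff_pd (contDiff_pi.mp h1 j) i).differentiable one_ne_zero x)
    ((contDiff_pd (contDiff_pi.mp h2 j) i).differentiable one_ne_zero x)]

lemma deriv_comb (c1 c2 k1 k2 t : ℝ) :
    deriv (fun s => Real.exp (c1 * s) * k1 + Real.exp (c2 * s) * k2) t
      = c1 * Real.exp (c1 * t) * k1 + c2 * Real.exp (c2 * t) * k2 := by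
  have h1 : HasDerivAt (fun s : ℝ => Real.exp (c1 * s) * k1)
      (c1 * Real.exp (c1 * t) * k1) t := by
    have h := (((hasDerivAt_id t).const_mul c1).exp).mul_const k1
    simp only [id_eq, mul_one] at h
    have e : c1 * Real.exp (c1 * t) * k1 = Real.exp (c1 * t) * c1 * k1 := by ring
    rwa [e]
  have h2 : HasDerivAt (fun s : ℝ => Real.exp (c2 * s) * k2)
      (c2 * Real.exp (c2 * t) * k2) t := by
    have h := (((hasDerivAt_id t).const_mul c2).exp).mul_const k2
    simp only [id_eq, mul_one] at h
    have e : c2 * Real.exp (c2 * t) * k2 = Real.exp (c2 * t) * c2 * k2 := by ring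
    rwa [e]
  exact (h1.add h2).deriv

lemma lap_beltrami {v : V3 → V3} (hv : ContDiff ℝ 2 v) {l : ℝ}
    (hdiv : ∀ x, div3 v x = 0) (hc : ∀ x, curl v x = l • v x) (x : V3) :
    lap v x = (-(l ^ 2)) • v x := by
  have hv0 : ContDiff ℝ 2 (fun y => v y 0) := contDiff_pi.mp hv 0
  have hv1 : ContDiff ℝ 2 (fun y => v y 1) := contDiff_pi.mp hv 1
  have hv2 : ContDiff ℝ 2 (fun y => v y 2) := contDiff_pi.mp hv 2
  have dv0 : ∀ y, DifferentiableAt ℝ (fun z => v z 0) y :=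
    fun y => (hv0.differentiable two_ne_zero) y
  have dv1 : ∀ y, DifferentiableAt ℝ (fun z => v z 1) y :=
    fun y => (hv1.differentiable two_ne_zero) y
  have dv2 : ∀ y, DifferentiableAt ℝ (fun z => v z 2) y :=
    fun y => (hv2.differentiable two_ne_zero) y
  -- abbreviations for differentiability of first partials
  have d00 := fun (y : V3) => ((contDiff_pd hv0 0).differentiable one_ne_zero) y
  have d10 := fun (y : V3) => ((contDiff_pd hv0 1).differentiable one_ne_zero) y
  have d20 := fun (y : V3) => ((contDiff_pd hv0 2).differentiable one_ne_zero) y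
  have d01 := fun (y : V3) => ((contDiff_pd hv1 0).differentiable one_ne_zero) y
  have d11 := fun (y : V3) => ((contDiff_pd hv1 1).differentiable one_ne_zero) y
  have d21 := fun (y : V3) => ((contDiff_pd hv1 2).differentiable one_ne_zero) y
  have d02 := fun (y : V3) => ((contDiff_pd hv2 0).differentiable one_ne_zero) y
  have d12 := fun (y : V3) => ((contDiff_pd hv2 1).differentiable one_ne_zero) y
  have d22 := fun (y : V3) => ((contDiff_pd hv2 2).differentiable one_ne_zero) y
  have E0 : ∀ y, pd 1 (fun z => v z 2) y - pd 2 (fun z => v z 1) y = l * v y 0 := by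
    intro y; have := congrFun (hc y) 0; simpa [curl] using this
  have E1 : ∀ y, pd 2 (fun z => v z 0) y - pd 0 (fun z => v z 2) y = l * v y 1 := by
    intro y; have := congrFun (hc y) 1; simpa [curl] using this
  have E2 : ∀ y, pd 0 (fun z => v z 1) y - pd 1 (fun z => v z 0) y = l * v y 2 := by
    intro y; have := congrFun (hc y) 2; simpa [curl] using this
  have E4 : ∀ y, pd 0 (fun z => v z 0) y + pd 1 (fun z => v z 1) y + pd 2 (fun z => v z 2) y = 0 :=
    fun y => hdiv y
  funext j
  fin_cases j
  · -- component 0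
    have h00 : (fun y => pd 0 (fun z => v z 0) y)
        = fun y => (-1 : ℝ) * pd 1 (fun z => v z 1) y + (-1 : ℝ) * pd 2 (fun z => v z 2) y := by
      funext y; have := E4 y; linarith
    have h10 : (fun y => pd 1 (fun z => v z 0) y)
        = fun y => (1 : ℝ) * pd 0 (fun z => v z 1) y + (-l) * v y 2 := by
      funext y; have := E2 y; linarith
    have h20 : (fun y => pd 2 (fun z => v z 0) y)
        = fun y => (1 : ℝ) * pd 0 (fun z => v z 2) y + l * v y 1 := by
      funext y; have := E1 y; linarith
    show (∑ i : Fin 3, pd i (fun y => pd i (fun z => v z 0) y) x) = _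
    rw [Fin.sum_univ_three, h00, h10, h20,
      pd_comb (d11 x) (d22 x), pd_comb (d01 x) (dv2 x), pd_comb (d02 x) (dv1 x),
      pd_symm hv1 1 0 x, pd_symm hv2 2 0 x]
    have := E0 x
    simp only [Pi.smul_apply, smul_eq_mul, Fin.zero_eta, Fin.mk_one, Fin.reduceFinMk]
    linear_combination (-l) * this
  · -- component 1
    have h01 : (fun y => pd 0 (fun z => v z 1) y)
        = fun y => (1 : ℝ) * pd 1 (fun z => v z 0) y + l * v y 2 := by
      funext y; have := E2 y; linarith
    have h11 : (fun y => pd 1 (fun z => v z 1) y)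
        = fun y => (-1 : ℝ) * pd 0 (fun z => v z 0) y + (-1 : ℝ) * pd 2 (fun z => v z 2) y := by
      funext y; have := E4 y; linarith
    have h21 : (fun y => pd 2 (fun z => v z 1) y)
        = fun y => (1 : ℝ) * pd 1 (fun z => v z 2) y + (-l) * v y 0 := by
      funext y; have := E0 y; linarith
    show (∑ i : Fin 3, pd i (fun y => pd i (fun z => v z 1) y) x) = _
    rw [Fin.sum_univ_three, h01, h11, h21,
      pd_comb (d10 x) (dv2 x), pd_comb (d00 x) (d22 x), pd_comb (d12 x) (dv0 x),
      pd_symm hv0 0 1 x, pd_symm hv2 2 1 x]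
    have := E1 x
    simp only [Pi.smul_apply, smul_eq_mul, Fin.zero_eta, Fin.mk_one, Fin.reduceFinMk]
    linear_combination (-l) * this
  · -- component 2
    have h02 : (fun y => pd 0 (fun z => v z 2) y)
        = fun y => (1 : ℝ) * pd 2 (fun z => v z 0) y + (-l) * v y 1 := by
      funext y; have := E1 y; linarith
    have h12 : (fun y => pd 1 (fun z => v z 2) y)
        = fun y => (1 : ℝ) * pd 2 (fun z => v z 1) y + l * v y 0 := by
      funext y; have := E0 y; linarith
    have h22 : (fun y => pd 2 (fun z => v z 2) y)
        = fun y => (-1 : ℝ) * pd 0 (fun z => v z 0) y + (-1 : ℝ) * pd 1 (fun z => v z 1) y := by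
      funext y; have := E4 y; linarith
    show (∑ i : Fin 3, pd i (fun y => pd i (fun z => v z 2) y) x) = _
    rw [Fin.sum_univ_three, h02, h12, h22,
      pd_comb (d20 x) (dv1 x), pd_comb (d21 x) (dv0 x), pd_comb (d00 x) (d11 x),
      pd_symm hv0 0 2 x, pd_symm hv1 1 2 x]
    have := E2 x
    simp only [Pi.smul_apply, smul_eq_mul, Fin.zero_eta, Fin.mk_one, Fin.reduceFinMk]
    linear_combination (-l) * this


/-- Theorem 2.4 (1): time-dependent double Beltrami states built from two
Beltrami flows solve viscous resistive Hall MHD with `ν = η` and constant pressure. -/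
theorem exact_double_beltrami_solution_distinct
    (ν : ℝ) (hν : 0 < ν) (l1 l2 : ℝ) (u01 u02 : V3 → V3)
    (hu01 : ContDiff ℝ 2 u01) (hu02 : ContDiff ℝ 2 u02)
    (hdiv1 : ∀ x, div3 u01 x = 0) (hdiv2 : ∀ x, div3 u02 x = 0)
    (hc1 : ∀ x, curl u01 x = l1 • u01 x) (hc2 : ∀ x, curl u02 x = l2 • u02 x)
    (α : ℝ) (hα : α = (l1 + l2 + Real.sqrt ((l1 - l2) ^ 2 + 4)) / 2)
    (u B : ℝ → V3 → V3)
    (hudef : ∀ t x, u t x = Real.exp (-ν * l1 ^ 2 * t) • u01 x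
        + Real.exp (-ν * l2 ^ 2 * t) • u02 x)
    (hBdef : ∀ t x, B t x = ((α - l1) * Real.exp (-ν * l1 ^ 2 * t)) • u01 x
        + ((α - l2) * Real.exp (-ν * l2 ^ 2 * t)) • u02 x) :
    (∀ t : ℝ, 0 ≤ t → ∀ x,
      dt u t x + cross (curl (u t) x) (u t x) - ν • lap (u t) x
        = cross (curl (B t) x) (B t x)) ∧
    (∀ t : ℝ, 0 ≤ t → ∀ x,
      dt B t x + curl (fun y => cross (B t y) (u t y)) x
        + curl (fun y => cross (curl (B t) y) (B t y)) x - ν • lap (B t) x = 0) ∧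
    (∀ t : ℝ, 0 ≤ t → ∀ x, div3 (u t) x = 0) ∧
    (∀ t : ℝ, 0 ≤ t → ∀ x, div3 (B t) x = 0) := by


  have hθ : (α - l1) * (α - l2) = 1 := by
    have h4 : (0:ℝ) ≤ (l1 - l2) ^ 2 + 4 := by positivity
    have hs : Real.sqrt ((l1 - l2) ^ 2 + 4) ^ 2 = (l1 - l2) ^ 2 + 4 := Real.sq_sqrt h4
    rw [hα]; linear_combination hs / 4
  have h1c : ContDiff ℝ 1 u01 := hu01.of_le one_le_two
  have h2c : ContDiff ℝ 1 u02 := hu02.of_le one_le_two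
  have hlap1 : ∀ x, lap u01 x = (-(l1 ^ 2)) • u01 x := lap_beltrami hu01 hdiv1 hc1
  have hlap2 : ∀ x, lap u02 x = (-(l2 ^ 2)) • u02 x := lap_beltrami hu02 hdiv2 hc2
  refine ⟨?_, ?_, ?_, ?_⟩
  · intro t ht x
    have hu_fun : u t = fun y => Real.exp (-ν * l1 ^ 2 * t) • u01 y
        + Real.exp (-ν * l2 ^ 2 * t) • u02 y := funext fun y => hudef t y
    have hB_fun : B t = fun y => ((α - l1) * Real.exp (-ν * l1 ^ 2 * t)) • u01 y
        + ((α - l2) * Real.exp (-ν * l2 ^ 2 * t)) • u02 y := funext fun y => hBdef t y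
    have Hcu : curl (u t) x = (Real.exp (-ν * l1 ^ 2 * t) * l1) • u01 x
        + (Real.exp (-ν * l2 ^ 2 * t) * l2) • u02 x := by
      rw [hu_fun, curl_comb h1c h2c, hc1 x, hc2 x, smul_smul, smul_smul]
    have Hcb : curl (B t) x = ((α - l1) * Real.exp (-ν * l1 ^ 2 * t) * l1) • u01 x
        + ((α - l2) * Real.exp (-ν * l2 ^ 2 * t) * l2) • u02 x := by
      rw [hB_fun, curl_comb h1c h2c, hc1 x, hc2 x, smul_smul, smul_smul]
    have Hlu : lap (u t) x = (Real.exp (-ν * l1 ^ 2 * t) * (-(l1 ^ 2))) • u01 x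
        + (Real.exp (-ν * l2 ^ 2 * t) * (-(l2 ^ 2))) • u02 x := by
      rw [hu_fun, lap_comb hu01 hu02, hlap1 x, hlap2 x, smul_smul, smul_smul]
    have Hdtu : dt u t x = fun j => (-ν * l1 ^ 2) * Real.exp (-ν * l1 ^ 2 * t) * u01 x j
        + (-ν * l2 ^ 2) * Real.exp (-ν * l2 ^ 2 * t) * u02 x j := by
      funext j
      have hfun : (fun s => u s x j) = fun s => Real.exp ((-ν * l1 ^ 2) * s) * u01 x j
          + Real.exp ((-ν * l2 ^ 2) * s) * u02 x j := by
        funext s; rw [hudef s x]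
        simp only [Pi.add_apply, Pi.smul_apply, smul_eq_mul]
      show deriv (fun s => u s x j) t = _
      rw [hfun, deriv_comb]
    rw [Hdtu, Hcu, Hlu, Hcb, hudef t x, hBdef t x]
    funext j
    fin_cases j
    · simp only [cross, Pi.add_apply, Pi.sub_apply, Pi.smul_apply, smul_eq_mul,
        Matrix.cons_val_zero, Matrix.cons_val_one, Matrix.head_cons, Fin.isValue,
        Fin.zero_eta, Fin.mk_one, Fin.reduceFinMk, Matrix.cons_val_two, Matrix.tail_cons]
      linear_combination (-(Real.exp (-ν * l1 ^ 2 * t) * Real.exp (-ν * l2 ^ 2 * t) * (l1 - l2)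
        * (u01 x 1 * u02 x 2 - u01 x 2 * u02 x 1))) * hθ
    · simp only [cross, Pi.add_apply, Pi.sub_apply, Pi.smul_apply, smul_eq_mul,
        Matrix.cons_val_zero, Matrix.cons_val_one, Matrix.head_cons, Fin.isValue,
        Fin.zero_eta, Fin.mk_one, Fin.reduceFinMk, Matrix.cons_val_two, Matrix.tail_cons]
      linear_combination (-(Real.exp (-ν * l1 ^ 2 * t) * Real.exp (-ν * l2 ^ 2 * t) * (l1 - l2)
        * (u01 x 2 * u02 x 0 - u01 x 0 * u02 x 2))) * hθ
    · simp only [cross, Pi.add_apply, Pi.sub_apply, Pi.smul_apply, smul_eq_mul,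
        Matrix.cons_val_zero, Matrix.cons_val_one, Matrix.head_cons, Fin.isValue,
        Fin.zero_eta, Fin.mk_one, Fin.reduceFinMk, Matrix.cons_val_two, Matrix.tail_cons]
      linear_combination (-(Real.exp (-ν * l1 ^ 2 * t) * Real.exp (-ν * l2 ^ 2 * t) * (l1 - l2)
        * (u01 x 0 * u02 x 1 - u01 x 1 * u02 x 0))) * hθ
  · intro t ht x
    have hB_fun : B t = fun y => ((α - l1) * Real.exp (-ν * l1 ^ 2 * t)) • u01 y
        + ((α - l2) * Real.exp (-ν * l2 ^ 2 * t)) • u02 y := funext fun y => hBdef t y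
    have Hcb : ∀ y, curl (B t) y = ((α - l1) * Real.exp (-ν * l1 ^ 2 * t) * l1) • u01 y
        + ((α - l2) * Real.exp (-ν * l2 ^ 2 * t) * l2) • u02 y := by
      intro y
      rw [hB_fun, curl_comb h1c h2c, hc1 y, hc2 y, smul_smul, smul_smul]
    have hFG : (fun y => cross (B t y) (u t y))
        = fun y => -(cross (curl (B t) y) (B t y)) := by
      funext y
      rw [Hcb y, hBdef t y, hudef t y]
      funext j
      fin_cases j
      · simp only [cross, Pi.add_apply, Pi.smul_apply, Pi.neg_apply, smul_eq_mul,
          Matrix.cons_val_zero, Matrix.cons_val_one, Matrix.head_cons, Fin.isValue,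
          Fin.zero_eta, Fin.mk_one, Fin.reduceFinMk, Matrix.cons_val_two, Matrix.tail_cons]
        linear_combination (Real.exp (-ν * l1 ^ 2 * t) * Real.exp (-ν * l2 ^ 2 * t) * (l1 - l2)
          * (u01 y 1 * u02 y 2 - u01 y 2 * u02 y 1)) * hθ
      · simp only [cross, Pi.add_apply, Pi.smul_apply, Pi.neg_apply, smul_eq_mul,
          Matrix.cons_val_zero, Matrix.cons_val_one, Matrix.head_cons, Fin.isValue,
          Fin.zero_eta, Fin.mk_one, Fin.reduceFinMk, Matrix.cons_val_two, Matrix.tail_cons]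
        linear_combination (Real.exp (-ν * l1 ^ 2 * t) * Real.exp (-ν * l2 ^ 2 * t) * (l1 - l2)
          * (u01 y 2 * u02 y 0 - u01 y 0 * u02 y 2)) * hθ
      · simp only [cross, Pi.add_apply, Pi.smul_apply, Pi.neg_apply, smul_eq_mul,
          Matrix.cons_val_zero, Matrix.cons_val_one, Matrix.head_cons, Fin.isValue,
          Fin.zero_eta, Fin.mk_one, Fin.reduceFinMk, Matrix.cons_val_two, Matrix.tail_cons]
        linear_combination (Real.exp (-ν * l1 ^ 2 * t) * Real.exp (-ν * l2 ^ 2 * t) * (l1 - l2)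
          * (u01 y 0 * u02 y 1 - u01 y 1 * u02 y 0)) * hθ
    have hsum : curl (fun y => cross (B t y) (u t y)) x
        = -(curl (fun y => cross (curl (B t) y) (B t y)) x) := by
      rw [hFG]; exact curl_neg _ x
    have Hlb : lap (B t) x = ((α - l1) * Real.exp (-ν * l1 ^ 2 * t) * (-(l1 ^ 2))) • u01 x
        + ((α - l2) * Real.exp (-ν * l2 ^ 2 * t) * (-(l2 ^ 2))) • u02 x := by
      rw [hB_fun, lap_comb hu01 hu02, hlap1 x, hlap2 x, smul_smul, smul_smul]
    have Hdtb : dt B t x = fun j =>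
        (-ν * l1 ^ 2) * Real.exp (-ν * l1 ^ 2 * t) * ((α - l1) * u01 x j)
        + (-ν * l2 ^ 2) * Real.exp (-ν * l2 ^ 2 * t) * ((α - l2) * u02 x j) := by
      funext j
      have hfun : (fun s => B s x j) = fun s => Real.exp ((-ν * l1 ^ 2) * s) * ((α - l1) * u01 x j)
          + Real.exp ((-ν * l2 ^ 2) * s) * ((α - l2) * u02 x j) := by
        funext s; rw [hBdef s x]
        simp only [Pi.add_apply, Pi.smul_apply, smul_eq_mul]
        ring
      show deriv (fun s => B s x j) t = _
      rw [hfun, deriv_comb]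
    rw [Hdtb, hsum, Hlb]
    funext j
    fin_cases j <;>
      simp only [Pi.add_apply, Pi.sub_apply, Pi.neg_apply, Pi.smul_apply, Pi.zero_apply,
        smul_eq_mul, Fin.isValue, Fin.zero_eta, Fin.mk_one, Fin.reduceFinMk] <;>
      ring
  · intro t ht x
    have hu_fun : u t = fun y => Real.exp (-ν * l1 ^ 2 * t) • u01 y
        + Real.exp (-ν * l2 ^ 2 * t) • u02 y := funext fun y => hudef t y
    rw [hu_fun, div3_comb h1c h2c, hdiv1 x, hdiv2 x]
    ring
  · intro t ht x
    have hB_fun : B t = fun y => ((α - l1) * Real.exp (-ν * l1 ^ 2 * t)) • u01 y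
        + ((α - l2) * Real.exp (-ν * l2 ^ 2 * t)) • u02 y := funext fun y => hBdef t y
    rw [hB_fun, div3_comb h1c h2c, hdiv1 x, hdiv2 x]
    ring
end
end
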